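/- Let L₃ > 0, μ̂ > 0, f̄ > 0, and let F_j, J_j, x_j, x̄_j be such that ‖F_j‖ ≤ 2f̄, ‖J_j(x̄_j - x_j) + F_j - F̄_j‖ ≤ L₃‖x_j - x̄_j‖², ‖F̄_j‖ = f̄, and μ_j ≤ μ̂. If s_j minimizes m_j(s) = ½‖F_j + J_j s‖² + ½ μ_j ‖F_j‖² ‖s‖², then ‖J_j s_j + F_j‖ ≤ f̄ + (2 μ̂ f̄ + L₃) ‖x_j - x̄_j‖². -/

import Mathlib

/-!
Comparing the minimizer `s` of the Levenberg–Marquardt model with the trial step `x̄ - x` gives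
`‖J s + F‖² ≤ ‖J (x̄ - x) + F‖² + μ ‖F‖² ‖x̄ - x‖²`. The Taylor bound and the triangle inequality
give `‖J (x̄ - x) + F‖ ≤ f̄ + L₃ t` with `t = ‖x - x̄‖²`, and `μ ‖F‖² ≤ 4 μ̂ f̄²`; the sum of the two
squares is at most `(f̄ + (2 μ̂ f̄ + L₃) t)²`.
-/

noncomputable def lmModel {E V : Type*} [SeminormedAddCommGroup E] [SeminormedAddCommGroup V]
    (F : V) (J : E → V) (μ : ℝ) (s : E) : ℝ :=
  1 / 2 * ‖F + J s‖ ^ 2 + 1 / 2 * μ * ‖F‖ ^ 2 * ‖s‖ ^ 2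

theorem sq_norm_add_le_of_lmModel_le {E V : Type*} [SeminormedAddCommGroup E]
    [SeminormedAddCommGroup V] {F : V} {J : E → V} {μ : ℝ} {s d : E} (hμ : 0 ≤ μ)
    (h : lmModel F J μ s ≤ lmModel F J μ d) :
    ‖F + J s‖ ^ 2 ≤ ‖F + J d‖ ^ 2 + μ * ‖F‖ ^ 2 * ‖d‖ ^ 2 := by
  unfold lmModel at h
  have : 0 ≤ μ * ‖F‖ ^ 2 * ‖s‖ ^ 2 := by positivity
  linarith

theorem sq_add_mul_add_le_sq {f μ L t : ℝ} (hf : 0 ≤ f) (hμ : 0 ≤ μ) (ht : 0 ≤ t)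
    (hLt : 0 ≤ L * t) :
    (f + L * t) ^ 2 + μ * (2 * f) ^ 2 * t ≤ (f + (2 * μ * f + L) * t) ^ 2 := by
  have : 0 ≤ μ * f * t * (L * t) := by positivity
  nlinarith [mul_nonneg (mul_nonneg (mul_nonneg hμ hf) ht) (mul_nonneg (mul_nonneg hμ hf) ht)]

theorem lm_model_residual_bound_general {mm nn : ℕ} (L3 muhat fbar muj : ℝ)
    (hmuj : 0 < muj) (hmujle : muj ≤ muhat)
    (Fj Fbarj : EuclideanSpace ℝ (Fin mm))
    (Jj : EuclideanSpace ℝ (Fin nn) →L[ℝ] EuclideanSpace ℝ (Fin mm))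
    (xj xbarj sj : EuclideanSpace ℝ (Fin nn))
    (hFnorm : ‖Fj‖ ≤ 2 * fbar)
    (hTaylor : ‖Jj (xbarj - xj) + Fj - Fbarj‖ ≤ L3 * ‖xj - xbarj‖ ^ 2)
    (hFbar : ‖Fbarj‖ = fbar)
    (mdl : EuclideanSpace ℝ (Fin nn) → ℝ)
    (hmdl : ∀ s, mdl s = 1 / 2 * ‖Fj + Jj s‖ ^ 2 + 1 / 2 * muj * ‖Fj‖ ^ 2 * ‖s‖ ^ 2)
    (hmin : ∀ s, mdl sj ≤ mdl s) :
    ‖Jj sj + Fj‖ ≤ fbar + (2 * muhat * fbar + L3) * ‖xj - xbarj‖ ^ 2 := by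
  obtain rfl : mdl = lmModel Fj Jj muj := funext hmdl
  have hcompare := sq_norm_add_le_of_lmModel_le hmuj.le (hmin (xbarj - xj))
  rw [norm_sub_rev xbarj xj, add_comm Fj, add_comm Fj] at hcompare
  set t := ‖xj - xbarj‖ ^ 2
  have hfbar : 0 ≤ fbar := hFbar ▸ norm_nonneg Fbarj
  have hmuhat : 0 ≤ muhat := hmuj.le.trans hmujle
  have hL3t : 0 ≤ L3 * t := (norm_nonneg _).trans hTaylor
  have htrial : ‖Jj (xbarj - xj) + Fj‖ ≤ fbar + L3 * t := by
    calc ‖Jj (xbarj - xj) + Fj‖ ≤ ‖Fbarj‖ + ‖Jj (xbarj - xj) + Fj - Fbarj‖ :=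
          norm_le_norm_add_norm_sub' _ _
      _ ≤ fbar + L3 * t := by rw [hFbar]; gcongr
  have hreg : muj * ‖Fj‖ ^ 2 * t ≤ muhat * (2 * fbar) ^ 2 * t := by gcongr
  have hbound : 0 ≤ fbar + (2 * muhat * fbar + L3) * t := by
    have : 0 ≤ 2 * muhat * fbar * t := by positivity
    linarith [add_mul (2 * muhat * fbar) L3 t]
  refine le_of_sq_le_sq ?_ hbound
  calc ‖Jj sj + Fj‖ ^ 2 ≤ (fbar + L3 * t) ^ 2 + muhat * (2 * fbar) ^ 2 * t := by
        linarith [pow_le_pow_left₀ (norm_nonneg _) htrial 2]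
    _ ≤ (fbar + (2 * muhat * fbar + L3) * t) ^ 2 :=
        sq_add_mul_add_le_sq hfbar hmuhat (by positivity) hL3t

/-- Lemma 4.1 (nonzero residual case): the residual of the minimizing LM model step
satisfies `‖J s + F‖ ≤ f̄ + (2μ̂f̄ + L₃)‖x - x̄‖²`. -/
theorem lm_model_residual_bound {mm nn : ℕ} (L3 muhat fbar muj : ℝ)
    (hL3 : 0 < L3) (hmuhat : 0 < muhat) (hfbar : 0 < fbar)
    (hmuj : 0 < muj) (hmujle : muj ≤ muhat)
    (Fj Fbarj : EuclideanSpace ℝ (Fin mm))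
    (Jj : EuclideanSpace ℝ (Fin nn) →L[ℝ] EuclideanSpace ℝ (Fin mm))
    (xj xbarj sj : EuclideanSpace ℝ (Fin nn))
    (hFnorm : ‖Fj‖ ≤ 2 * fbar)
    (hTaylor : ‖Jj (xbarj - xj) + Fj - Fbarj‖ ≤ L3 * ‖xj - xbarj‖ ^ 2)
    (hFbar : ‖Fbarj‖ = fbar)
    (mdl : EuclideanSpace ℝ (Fin nn) → ℝ)
    (hmdl : ∀ s, mdl s = 1 / 2 * ‖Fj + Jj s‖ ^ 2 + 1 / 2 * muj * ‖Fj‖ ^ 2 * ‖s‖ ^ 2)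
    (hmin : ∀ s, mdl sj ≤ mdl s) :
    ‖Jj sj + Fj‖ ≤ fbar + (2 * muhat * fbar + L3) * ‖xj - xbarj‖ ^ 2 :=
  lm_model_residual_bound_general L3 muhat fbar muj hmuj hmujle Fj Fbarj Jj xj xbarj sj hFnorm
    hTaylor hFbar mdl hmdl hmin
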